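/- Incompatibility is witnessed at a constructor clash: if ground type t is incompatible with type s (which may contain holes), then s and t disagree at some position where s has a non-hole constructor, i.e., there is a common position p such that the head constructors of s and t at p are both defined, neither is a hole, and they differ. -/

import Mathlib

/-- Types: t ::= Int | Bool | t × t | Tree t | Fun | α (type hole). -/
inductive Ty : Type where
  | int : Ty
  | bool : Ty
  | fn : Ty
  | prod (t₁ t₂ : Ty) : Ty
  | tree (t : Ty) : Ty
  | hole (α : ℕ) : Ty
deriving DecidableEq

/-- A type substitution: a (partial) map from type holes to types. -/
abbrev TSub := ℕ → Option Ty

/-- Homomorphic application of a type substitution. -/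
def Ty.subst (θ : TSub) : Ty → Ty
  | .int => .int
  | .bool => .bool
  | .fn => .fn
  | .prod t₁ t₂ => .prod (t₁.subst θ) (t₂.subst θ)
  | .tree t => .tree (t.subst θ)
  | .hole α => (θ α).getD (.hole α)

/-- s ∼ t : some substitution maps both to the same type. -/
def Compatible (s t : Ty) : Prop := ∃ θ : TSub, s.subst θ = t.subst θ

/-- s ⊑ t : some substitution maps t to s. -/
def Refines (s t : Ty) : Prop := ∃ θ : TSub, s = t.subst θ

/-- Ground types contain no type holes. -/
def Ty.Ground : Ty → Prop
  | .int => True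
  | .bool => True
  | .fn => True
  | .prod t₁ t₂ => t₁.Ground ∧ t₂.Ground
  | .tree t => t.Ground
  | .hole _ => False

/-- The set of type holes occurring in a type. -/
def Ty.holes : Ty → Set ℕ
  | .int => ∅
  | .bool => ∅
  | .fn => ∅
  | .prod t₁ t₂ => t₁.holes ∪ t₂.holes
  | .tree t => t.holes
  | .hole α => {α}

/-- Number of occurrences of a hole in a type. -/
def Ty.occs : Ty → ℕ → ℕ
  | .int, _ => 0
  | .bool, _ => 0
  | .fn, _ => 0
  | .prod t₁ t₂, α => t₁.occs α + t₂.occs α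
  | .tree t, α => t.occs α
  | .hole β, α => if β = α then 1 else 0

/-- The subterm of a type at a position (a path into the term tree). -/
def Ty.subAt : Ty → List ℕ → Option Ty
  | t, [] => some t
  | .prod t₁ _, 0 :: p => t₁.subAt p
  | .prod _ t₂, 1 :: p => t₂.subAt p
  | .tree t, 0 :: p => t.subAt p
  | _, _ => none

/-- The head constructor of a type, as a tag. -/
def Ty.head : Ty → ℕ
  | .int => 0
  | .bool => 1
  | .fn => 2
  | .prod _ _ => 3
  | .tree _ => 4
  | .hole _ => 5

/-- A type is a hole. -/
def Ty.IsHole : Ty → Prop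
  | .hole _ => True
  | _ => False

/-! Against a ground type, unification is matching. If no position of `s` carries a non-hole
constructor that clashes with the one of `t` there, then every hole of `s` sits over a subterm
of `t`; since `s` is linear, these assignments never conflict, and they assemble into a
substitution `θ` with `θ(s) = t = θ(t)`. -/

namespace Ty

theorem subst_of_ground {t : Ty} (ht : t.Ground) (θ : TSub) : t.subst θ = t := by
  induction t with
  | int | bool | fn => rfl
  | prod t₁ t₂ ih₁ ih₂ => rw [subst, ih₁ ht.1, ih₂ ht.2]
  | tree t ih => rw [subst, ih ht]
  | hole α => exact ht.elim

theorem Ground.not_isHole {t : Ty} (ht : t.Ground) : ¬ t.IsHole := by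
  cases t <;> simp_all [Ground, IsHole]

theorem subst_congr {s : Ty} {θ θ' : TSub} (h : ∀ α, s.occs α ≠ 0 → θ α = θ' α) :
    s.subst θ = s.subst θ' := by
  induction s with
  | int | bool | fn => rfl
  | prod s₁ s₂ ih₁ ih₂ =>
    rw [subst, subst, ih₁ fun α hα => h α (by simp only [occs]; omega),
      ih₂ fun α hα => h α (by simp only [occs]; omega)]
  | tree s ih => rw [subst, subst, ih h]
  | hole β => simp [subst, h β (by simp [occs])]

theorem exists_subst_prod_eq {s₁ s₂ : Ty} (hdisj : ∀ α, s₁.occs α = 0 ∨ s₂.occs α = 0)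
    (θ₁ θ₂ : TSub) : ∃ θ, (prod s₁ s₂).subst θ = prod (s₁.subst θ₁) (s₂.subst θ₂) := by
  refine ⟨fun α => if s₁.occs α = 0 then θ₂ α else θ₁ α, ?_⟩
  rw [subst, subst_congr (θ' := θ₁) fun α hα => if_neg hα,
    subst_congr (s := s₂) (θ' := θ₂) fun α hα => if_pos ((hdisj α).resolve_right hα)]

end Ty

def HasClash (s t : Ty) : Prop :=
  ∃ (p : List ℕ) (s' t' : Ty), s.subAt p = some s' ∧ t.subAt p = some t' ∧
    ¬ s'.IsHole ∧ ¬ t'.IsHole ∧ s'.head ≠ t'.head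

namespace HasClash

theorem prod_left {s₁ s₂ t₁ t₂ : Ty} (h : HasClash s₁ t₁) :
    HasClash (.prod s₁ s₂) (.prod t₁ t₂) :=
  let ⟨p, s', t', h⟩ := h
  ⟨0 :: p, s', t', h⟩

theorem prod_right {s₁ s₂ t₁ t₂ : Ty} (h : HasClash s₂ t₂) :
    HasClash (.prod s₁ s₂) (.prod t₁ t₂) :=
  let ⟨p, s', t', h⟩ := h
  ⟨1 :: p, s', t', h⟩

theorem tree {s t : Ty} (h : HasClash s t) : HasClash (.tree s) (.tree t) :=
  let ⟨p, s', t', h⟩ := h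
  ⟨0 :: p, s', t', h⟩

end HasClash

namespace Ty

theorem head_eq_of_not_hasClash {s t : Ty} (hs : ¬ s.IsHole) (ht : ¬ t.IsHole)
    (h : ¬ HasClash s t) : s.head = t.head := by
  by_contra hne
  exact h ⟨[], s, t, subAt.eq_1 s, subAt.eq_1 t, hs, ht, hne⟩

theorem exists_subst_eq_of_not_hasClash {s t : Ty} (ht : t.Ground)
    (hlin : ∀ α, s.occs α ≤ 1) (hno : ¬ HasClash s t) : ∃ θ, s.subst θ = t := by
  induction s generalizing t with
  | hole α => exact ⟨fun _ => some t, rfl⟩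
  | int | bool | fn =>
    have hroot := head_eq_of_not_hasClash id ht.not_isHole hno
    cases t <;> first | exact ⟨fun _ => none, rfl⟩ | simp [head] at hroot
  | tree s ih =>
    have hroot := head_eq_of_not_hasClash id ht.not_isHole hno
    cases t <;> try simp [head] at hroot
    case tree t =>
      obtain ⟨θ, hθ⟩ := ih (t := t) ht hlin fun h => hno h.tree
      exact ⟨θ, by rw [subst, hθ]⟩
  | prod s₁ s₂ ih₁ ih₂ =>
    have hroot := head_eq_of_not_hasClash id ht.not_isHole hno
    cases t <;> try simp [head] at hroot
    case prod t₁ t₂ =>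
      have hlin' : ∀ α, s₁.occs α + s₂.occs α ≤ 1 := hlin
      obtain ⟨θ₁, hθ₁⟩ := ih₁ ht.1 (fun α => le_self_add.trans (hlin' α)) fun h => hno h.prod_left
      obtain ⟨θ₂, hθ₂⟩ := ih₂ ht.2 (fun α => le_add_self.trans (hlin' α)) fun h => hno h.prod_right
      obtain ⟨θ, hθ⟩ := exists_subst_prod_eq (s₁ := s₁) (s₂ := s₂)
        (fun α => by have := hlin' α; omega) θ₁ θ₂
      exact ⟨θ, by rw [hθ, hθ₁, hθ₂]⟩

end Ty

/-- Incompatibility with a ground type is witnessed by a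
constructor clash: if t is ground, s is linear in its holes, and s ≁ t,
then at some common position both types carry non-hole constructors whose
heads differ. -/
theorem incompatibility_witnessed_by_clash (s t : Ty)
    (ht : t.Ground) (hlin : ∀ α : ℕ, s.occs α ≤ 1)
    (hinc : ¬ Compatible s t) :
    ∃ (p : List ℕ) (s' t' : Ty),
      s.subAt p = some s' ∧ t.subAt p = some t' ∧
      ¬ s'.IsHole ∧ ¬ t'.IsHole ∧ s'.head ≠ t'.head := by
  by_contra hno
  obtain ⟨θ, hθ⟩ := Ty.exists_subst_eq_of_not_hasClash ht hlin hno
  exact hinc ⟨θ, by rw [hθ, Ty.subst_of_ground ht]⟩
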